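/- Under the standing hypotheses (f,g rational rotation numbers, f_t positive one-parameter family commuting with f, g_t = f_t∘g of constant rotation number), for any ε > 0 there exists t₀ such that for all t > t₀, the periodic set Per(f_t∘g) lies in the ε-neighborhood of P(f,g) ∪ ∂N(f,g). -/

import Mathlib

open Set Function Filter MeasureTheory

/-- An orientation-preserving homeomorphism of `ℝ` commuting with `x ↦ x + 1`,
i.e. a lift of an orientation-preserving circle homeomorphism. -/
structure HomeoZR : Type where
  toFun : ℝ → ℝ
  invFun : ℝ → ℝ
  left_inv : Function.LeftInverse invFun toFun
  right_inv : Function.RightInverse invFun toFun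
  strictMono : StrictMono toFun
  map_add_one : ∀ x, toFun (x + 1) = toFun x + 1

namespace HomeoZR

/-- The identity. -/
protected def id : HomeoZR :=
  ⟨_root_.id, _root_.id, fun _ => rfl, fun _ => rfl, strictMono_id, fun _ => rfl⟩

/-- Composition `f ∘ g`. -/
protected def comp (f g : HomeoZR) : HomeoZR where
  toFun := f.toFun ∘ g.toFun
  invFun := g.invFun ∘ f.invFun
  left_inv := fun x => by
    show g.invFun (f.invFun (f.toFun (g.toFun x))) = x
    rw [f.left_inv, g.left_inv]
  right_inv := fun x => by
    show f.toFun (g.toFun (g.invFun (f.invFun x))) = x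
    rw [g.right_inv, f.right_inv]
  strictMono := f.strictMono.comp g.strictMono
  map_add_one := fun x => by
    show f.toFun (g.toFun (x + 1)) = f.toFun (g.toFun x) + 1
    rw [g.map_add_one, f.map_add_one]

/-- Inverse. -/
protected def symm (f : HomeoZR) : HomeoZR where
  toFun := f.invFun
  invFun := f.toFun
  left_inv := f.right_inv
  right_inv := f.left_inv
  strictMono := by
    intro x y hxy
    rcases lt_trichotomy (f.invFun x) (f.invFun y) with h | h | h
    · exact h
    · exact absurd (by rw [← f.right_inv x, ← f.right_inv y, h]) (ne_of_lt hxy)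
    · have h2 := f.strictMono h
      rw [f.right_inv, f.right_inv] at h2
      exact absurd h2 (lt_asymm hxy)
  map_add_one := fun x => by
    have h1 : f.invFun (f.toFun (f.invFun x + 1)) = f.invFun (x + 1) := by
      rw [f.map_add_one, f.right_inv]
    rw [f.left_inv] at h1
    exact h1.symm

/-- The associated monotone degree-one lift. -/
def toLift (f : HomeoZR) : CircleDeg1Lift :=
  ⟨⟨f.toFun, f.strictMono.monotone⟩, f.map_add_one⟩

/-- The translation number `rot̃(f)`. -/
noncomputable def transNum (f : HomeoZR) : ℝ :=
  f.toLift.translationNumber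

/-- The canonical lift of the underlying circle homeomorphism: the lift whose
translation number lies in `[0,1)`, as a plain function. -/
noncomputable def canon (f : HomeoZR) : ℝ → ℝ :=
  fun x => f.toFun x - (⌊f.transNum⌋ : ℝ)

/-- The periodic points of the underlying circle homeomorphism, as a
`ℤ`-periodic subset of `ℝ`. -/
def Per (f : HomeoZR) : Set ℝ :=
  {x | ∃ n : ℕ, 0 < n ∧ ∃ m : ℤ, f.toFun^[n] x = x + m}

/-- The fixed points of the underlying circle homeomorphism, as a subset of `ℝ`. -/
def FixS (f : HomeoZR) : Set ℝ :=
  {x | ∃ m : ℤ, f.toFun x = x + m}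

/-- `q(f)`: the minimal period of the underlying circle homeomorphism. -/
noncomputable def q (f : HomeoZR) : ℕ :=
  sInf {n : ℕ | 0 < n ∧ ∃ x : ℝ, ∃ m : ℤ, f.toFun^[n] x = x + m}

/-- `p(f)`: the least `p ≥ 0` with `rot(f) = p / q(f)` mod `ℤ`. -/
noncomputable def p (f : HomeoZR) : ℕ :=
  sInf {p : ℕ | ∃ m : ℤ, f.transNum = (p : ℝ) / (f.q : ℝ) + (m : ℝ)}

/-- Natural powers. -/
protected def npow (f : HomeoZR) : ℕ → HomeoZR
  | 0 => HomeoZR.id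
  | n + 1 => (f.npow n).comp f

/-- Integer powers. -/
protected def zpow (f : HomeoZR) (k : ℤ) : HomeoZR :=
  if 0 ≤ k then f.npow k.toNat else f.symm.npow (-k).toNat

end HomeoZR

/-- `f` has rational rotation number. -/
def RatRot (f : HomeoZR) : Prop := ∃ r : ℚ, f.transNum = (r : ℝ)

/-- `F` is a positive one-parameter family (one-parameter group) commuting with `f`:
for `t ≠ 0` the fixed set of `F t` is the frontier of `Per f`, and for `t > 0` the
canonical lift of `F t` moves every point off the frontier strictly to the right. -/
def PosFamily (f : HomeoZR) (F : ℝ → HomeoZR) : Prop :=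
  (∀ s t, (F (s + t)).toFun = (F s).toFun ∘ (F t).toFun) ∧
  (∀ t, (F t).toFun ∘ f.toFun = f.toFun ∘ (F t).toFun) ∧
  (∀ t, t ≠ 0 → (F t).FixS = frontier f.Per) ∧
  (∀ t, 0 < t → ∀ x, x ∉ frontier f.Per → x < (F t).canon x)

/-- `δ_{f,g}(x,t)`, where `F` is a positive one-parameter family commuting with `f`. -/
noncomputable def delta (F : ℝ → HomeoZR) (g : HomeoZR) (x t : ℝ) : ℝ :=
  ((F t).canon ∘ g.canon)^[g.q] x - x - (g.p : ℝ)

/-- Persistent periodic points. -/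
def Pset (F : ℝ → HomeoZR) (g : HomeoZR) : Set ℝ := {x | ∀ t, delta F g x t = 0}

/-- Never-periodic points. -/
def Nset (F : ℝ → HomeoZR) (g : HomeoZR) : Set ℝ := {x | ∀ t, delta F g x t ≠ 0}

/-- Points periodic at a unique time. -/
def Uset (F : ℝ → HomeoZR) (g : HomeoZR) : Set ℝ := {x | ∃! t, delta F g x t = 0}

/-- `x` has a finite orbit in the circle under the group generated by `f` and `g`. -/
def FiniteOrbit (f g : HomeoZR) (x : ℝ) : Prop :=
  ∃ S : Set ℝ, S.Finite ∧ x ∈ S ∧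
    (∀ y ∈ S, ∃ z ∈ S, ∃ m : ℤ, f.toFun y = z + m) ∧
    (∀ y ∈ S, ∃ z ∈ S, ∃ m : ℤ, g.toFun y = z + m)

/-- `τ(f_1, …, f_n) = rot̃(f_n ∘ ⋯ ∘ f_1) − Σ rot̃(f_i)`. -/
noncomputable def tau (L : List HomeoZR) : ℝ :=
  (L.foldl (fun h u => u.comp h) HomeoZR.id).transNum
    - (L.map HomeoZR.transNum).sum

/-!
If `∂ Per(f)` is nonempty, every `f_t` fixes it pointwise, so `rot̃(f_t) = 0`, `t ↦ f_t` is
monotone, and (its discontinuities being countable and invariant under all time shifts)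
continuous. Hence `t ↦ rot̃(f_t ∘ g)` is continuous with values in `rot̃(g) + ℤ`, i.e. constant, and
a periodic point of `f_t ∘ g` is a zero of `δ(·, t)`. Moreover `δ(x, ·)` is nondecreasing, and if
it is constant on some `[t, t']`, then `g` maps the orbit of `x` into `∂ Per(f)`, where every `f_s`
is the identity, so `x ∈ P`. A point `x ∉ P ∪ ∂N` therefore has a neighbourhood on which
`δ(·, t) ≠ 0` for all large `t` (it lies in the interior of `N`, or `δ(x, ·)` becomes positive),
and compactness of `[0, 1]` minus the `ε`-thickening of the `ℤ`-invariant set `P ∪ ∂N` gives a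
uniform `t₀`.

If `∂ Per(f)` were empty, the flow would act freely, with injective additive rotation number
`φ(t) = rot̃(f_t)`. The semiconjugacy `H` to the translations by `φ(t)` is continuous and injective
(jumps and flat pieces of `H` would be invariant under the uncountable group `φ(ℝ)`), so `H`
conjugates `f_t ∘ g` to `R_{φ(t)} ∘ g'`. Then `c ↦ rot̃(R_c ∘ g')` is continuous, lies in
`rot̃(g) + ℤ` on the dense set `φ(ℝ)`, hence is constant, yet it increases by `1` from `c = 0` to
`c = 1`.
-/

open CircleDeg1Lift Topology

theorem Rat.exists_eq_intCast_div_iff_den_dvd (r : ℚ) {n : ℕ} (hn : 0 < n) :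
    (∃ m : ℤ, r = m / n) ↔ r.den ∣ n := by
  constructor
  · rintro ⟨m, rfl⟩
    have := Rat.den_dvd m n
    rw [Rat.divInt_eq_div] at this
    exact_mod_cast this
  · rintro ⟨k, rfl⟩
    refine ⟨r.num * k, ?_⟩
    have hk : (k : ℚ) ≠ 0 := Nat.cast_ne_zero.2 (Nat.pos_of_mul_pos_left hn).ne'
    push_cast
    rw [← r.mul_den_eq_num]
    field_simp

theorem Rat.num_intFract (r : ℚ) : (Int.fract r).num = r.num % r.den := by
  have h := (Int.fract r).mul_den_eq_num
  rw [Rat.den_intFract, Int.fract, Rat.floor_def', sub_mul, r.mul_den_eq_num] at h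
  rw [Int.fract, Rat.floor_def', ← Int.cast_inj (α := ℚ), ← h, Int.emod_def]
  push_cast
  ring

theorem AddMonoidHom.eq_zero_of_forall_eq_intCast (φ : ℝ →+ ℝ) (h : ∀ t, ∃ m : ℤ, φ t = m) :
    φ = 0 := by
  ext t
  obtain ⟨m, hm⟩ := h t
  set n : ℕ := m.natAbs + 1
  obtain ⟨k, hk⟩ := h (t / n)
  have hmk : m = n * k := by
    have : φ t = n • φ (t / n) := by
      rw [← map_nsmul, nsmul_eq_mul, mul_div_cancel₀ _ (by positivity)]
    rw [hm, hk, nsmul_eq_mul] at this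
    exact_mod_cast this
  have : m = 0 := Int.eq_zero_of_dvd_of_natAbs_lt_natAbs ⟨k, hmk⟩ (by omega)
  rw [hm, this, Int.cast_zero, AddMonoidHom.zero_apply]

theorem Continuous.eq_of_dense_of_forall_eq_add_int {X : Type*} [TopologicalSpace X]
    [PreconnectedSpace X] {u : X → ℝ} (hu : Continuous u) {D : Set X} (hD : Dense D) {v : ℝ}
    (hint : ∀ c ∈ D, ∃ m : ℤ, u c = v + m) (a b : X) : u a = u b := by
  have hall : ∀ c, ∃ m : ℤ, u c = v + m := by
    have hclosed : IsClosed {c | ∃ m : ℤ, u c = v + m} := by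
      convert Int.isClosedEmbedding_coe_real.isClosed_range.preimage
        (hu.sub (continuous_const (y := v))) using 1
      ext c
      exact exists_congr fun m => by simp only [Pi.sub_apply, sub_eq_iff_eq_add', eq_comm]
    exact fun c => hclosed.closure_subset_iff.2 hint (hD c)
  wlog hab : u a ≤ u b generalizing a b
  · exact (this b a (le_of_not_ge hab)).symm
  obtain ⟨m, hm⟩ := hall a
  obtain ⟨m', hm'⟩ := hall b
  by_contra hne
  have hlt : (m : ℝ) + 1 ≤ m' := by
    have : m < m' := by exact_mod_cast (show (m : ℝ) < m' by linarith [lt_of_le_of_ne hab hne])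
    exact_mod_cast this
  obtain ⟨c, hc⟩ := intermediate_value_univ a b hu
    (show v + m + 1 / 2 ∈ Icc (u a) (u b) from ⟨by linarith, by linarith⟩)
  obtain ⟨k, hk⟩ := hall c
  have : ((2 * (k - m) : ℤ) : ℝ) = 1 := by push_cast; linarith
  have : 2 * (k - m) = 1 := by exact_mod_cast this
  omega

theorem AddSubgroup.dense_of_not_countable (S : AddSubgroup ℝ) (hS : ¬ (S : Set ℝ).Countable) :
    Dense (S : Set ℝ) := by
  refine (AddSubgroup.dense_or_cyclic S).resolve_right fun ⟨a, ha⟩ => hS ?_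
  rw [ha, ← AddSubgroup.zmultiples_eq_closure, AddSubgroup.coe_zmultiples]
  exact countable_range _

theorem Monotone.continuous_of_forall_map_add {h : ℝ → ℝ} (hh : Monotone h) {S : Set ℝ}
    (hS : ¬ S.Countable) (he : ∀ s ∈ S, ∃ e : ℝ ≃ₜ ℝ, ∀ x, h (s + x) = e (h x)) :
    Continuous h := by
  have hshift : ∀ s ∈ S, ∀ x, ContinuousAt h (s + x) ↔ ContinuousAt h x := by
    intro s hs x
    obtain ⟨e, he⟩ := he s hs
    have hcomp : h ∘ Homeomorph.addLeft s = e ∘ h := funext he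
    change ContinuousAt h (Homeomorph.addLeft s x) ↔ _
    rw [← (Homeomorph.addLeft s).comp_continuousAt_iff' h x, hcomp, e.comp_continuousAt_iff]
  refine continuous_iff_continuousAt.2 fun x => by_contra fun hx => hS ?_
  refine (hh.countable_not_continuousAt.preimage (add_left_injective x)).mono fun s hs => ?_
  exact (hshift s hs x).not.2 hx

/-- A flat piece `[a, b]` of `H` would be moved by the shifts `φ t` to flat pieces that are
pairwise distinct, since the `G t` with `t ≠ 0` have no fixed points; choosing a rational number in
each of them injects `ℝ` into `ℚ`. -/
theorem Monotone.injective_of_semiconj_add {H : ℝ → ℝ} (hH : Monotone H) (φ : ℝ →+ ℝ)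
    (G : ℝ → ℝ → ℝ) (hsemi : ∀ t y, H (φ t + y) = G t (H y))
    (hfree : ∀ t ≠ 0, ∀ z, G t z ≠ z) : Injective H := by
  intro a b hab
  by_contra hne
  wlog hlt : a < b generalizing a b
  · exact this hab.symm (Ne.symm hne) (lt_of_le_of_ne (le_of_not_gt hlt) (Ne.symm hne))
  have hflat : ∀ t, H (φ t + a) = H (φ t + b) := fun t => by rw [hsemi, hsemi, hab]
  choose q hq using fun t => exists_rat_btwn (show φ t + a < φ t + b by linarith)
  have hHq : ∀ t, H (q t) = H (φ t + a) := fun t =>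
    le_antisymm ((hH (hq t).2.le).trans (hflat t).ge) (hH (hq t).1.le)
  have hq_inj : Injective q := by
    intro t t' htt
    by_contra hne'
    apply hfree (t' - t) (sub_ne_zero.2 (Ne.symm hne')) (H (φ t + a))
    rw [← hsemi, ← add_assoc, ← map_add, sub_add_cancel, ← hHq, ← htt, hHq]
  exact Cardinal.not_countable_real (@Set.countable_univ _ hq_inj.countable)

theorem continuous_uncurry_of_monotone {X : Type*} [TopologicalSpace X] {Φ : ℝ → X → ℝ}
    (hmono : ∀ y, Monotone (Φ · y)) (hcont₁ : ∀ y, Continuous (Φ · y))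
    (hcont₂ : ∀ t, Continuous (Φ t)) : Continuous (uncurry Φ) := by
  refine continuous_iff_continuousAt.2 fun ⟨t₀, y₀⟩ => ?_
  rw [ContinuousAt, nhds_prod_eq, tendsto_order]
  constructor
  · intro a ha
    obtain ⟨t₁, ht₁, hat₁⟩ : ∃ t₁ < t₀, a < Φ t₁ y₀ :=
      (((hcont₁ y₀).tendsto t₀).eventually (lt_mem_nhds ha)).exists_lt
    filter_upwards [prod_mem_prod (Ioi_mem_nhds ht₁)
      (((hcont₂ t₁).tendsto y₀).eventually (lt_mem_nhds hat₁))] with p hp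
    exact hp.2.trans_le (hmono p.2 (le_of_lt hp.1))
  · intro b hb
    obtain ⟨t₁, ht₁, hbt₁⟩ : ∃ t₁ > t₀, Φ t₁ y₀ < b :=
      (((hcont₁ y₀).tendsto t₀).eventually (gt_mem_nhds hb)).exists_gt
    filter_upwards [prod_mem_prod (Iio_mem_nhds ht₁)
      (((hcont₂ t₁).tendsto y₀).eventually (gt_mem_nhds hbt₁))] with p hp
    exact (hmono p.2 (le_of_lt hp.1)).trans_lt hp.2

theorem add_mem_frontier_iff {S : Set ℝ} {c : ℝ} (hS : ∀ z, z + c ∈ S ↔ z ∈ S) (z : ℝ) :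
    z + c ∈ frontier S ↔ z ∈ frontier S := by
  change z ∈ Homeomorph.addRight c ⁻¹' frontier S ↔ _
  rw [Homeomorph.preimage_frontier]
  exact Iff.of_eq (congrArg (z ∈ frontier ·) (Set.ext hS))

theorem add_int_mem_thickening {A : Set ℝ} (hA : ∀ z ∈ A, ∀ k : ℤ, z + k ∈ A) {ε x : ℝ}
    (hx : x ∈ Metric.thickening ε A) (k : ℤ) : x + k ∈ Metric.thickening ε A := by
  obtain ⟨z, hz, hxz⟩ := Metric.mem_thickening_iff.1 hx
  exact Metric.mem_thickening_iff.2 ⟨z + k, hA z hz k, by rwa [dist_add_right]⟩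

namespace CircleDeg1Lift

theorem commute_translate_intCast (f : CircleDeg1Lift) (k : ℤ) :
    _root_.Commute ↑(translate (Multiplicative.ofAdd (k : ℝ))) f :=
  (commute_iff_commute).2 fun x => by simp only [translate_apply]; exact (f.map_int_add k x).symm

theorem continuous_coe_units (u : CircleDeg1Liftˣ) : Continuous (u : CircleDeg1Lift) :=
  (continuous_iff_surjective _).2 fun y => ⟨(↑u⁻¹ : CircleDeg1Lift) y, units_apply_inv_apply u y⟩

theorem continuous_translationNumber {X : Type*} [TopologicalSpace X] {Φ : X → CircleDeg1Lift}
    (hΦ : ∀ n : ℕ, Continuous fun c => (Φ c ^ n) 0) :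
    Continuous fun c => (Φ c).translationNumber := by
  refine TendstoUniformly.continuous (F := fun (n : ℕ) c => (Φ c ^ n) 0 / n) (p := atTop) ?_
    (Frequently.of_forall fun n => (hΦ n).div_const _)
  rw [Metric.tendstoUniformly_iff]
  intro ε hε
  obtain ⟨N, hN⟩ := exists_nat_gt (1 / ε)
  filter_upwards [eventually_gt_atTop N] with n hn c
  have hn₀ : (0 : ℝ) < n := by exact_mod_cast (Nat.zero_le N).trans_lt hn
  have hNn : (N : ℝ) < n := by exact_mod_cast hn
  calc dist (Φ c).translationNumber ((Φ c ^ n) 0 / n)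
      = dist ((Φ c ^ n) 0) (n * (Φ c).translationNumber) / n := by
        have : (Φ c ^ n) 0 / n - (Φ c).translationNumber =
            ((Φ c ^ n) 0 - n * (Φ c).translationNumber) / n := by
          field_simp
        rw [dist_comm, Real.dist_eq, this, abs_div, abs_of_pos hn₀, Real.dist_eq]
    _ ≤ 1 / n := div_le_div_of_nonneg_right
        ((Φ c).dist_pow_map_zero_mul_translationNumber_le n) hn₀.le
    _ < ε := by
        rw [div_lt_iff₀ hn₀]
        rw [div_lt_iff₀ hε] at hN
        nlinarith

theorem iterate_den_eq_add_num (f : CircleDeg1Lift) {s : ℚ} (hs : f.translationNumber = s)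
    {x : ℝ} {n : ℕ} {m : ℤ} (hn : 0 < n) (hx : f^[n] x = x + m) : f^[s.den] x = x + s.num := by
  have hsn : s = m / n := by
    have := f.translationNumber_of_map_pow_eq_add_int (by rwa [coe_pow]) hn
    exact_mod_cast hs.symm.trans this
  obtain ⟨k, rfl⟩ := (s.exists_eq_intCast_div_iff_den_dvd hn).1 ⟨m, hsn⟩
  have hk : 0 < k := Nat.pos_of_mul_pos_left hn
  have hm : m = k * s.num := by
    have hden : ((s.den * k : ℕ) : ℚ) ≠ 0 := by positivity
    have : (m : ℚ) = k * s.num := by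
      rw [eq_div_iff hden] at hsn
      rw [← hsn, ← s.mul_den_eq_num]
      push_cast
      ring
    exact_mod_cast this
  have hiter : (f ^ s.den)^[k] x = x + k * s.num := by
    rw [coe_pow, ← iterate_mul, hx, hm]
    push_cast
    ring
  rw [← coe_pow]
  exact ((f ^ s.den).iterate_pos_eq_iff hk).1 hiter

theorem exists_translationNumber_translate_mul_ne_add_int {f : CircleDeg1Lift}
    (hf : Continuous f) {D : Set ℝ} (hD : Dense D) (v : ℝ) :
    ∃ c ∈ D, ∀ m : ℤ, (↑(translate (Multiplicative.ofAdd c)) * f).translationNumber ≠ v + m := by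
  by_contra! h
  set U : ℝ → ℝ := fun c => (↑(translate (Multiplicative.ofAdd c)) * f).translationNumber
  have hU : Continuous U := continuous_translationNumber fun n => by
    induction n with
    | zero => simpa using continuous_const
    | succ n ih =>
      simp only [pow_succ', mul_apply, translate_apply]
      exact continuous_id.add (hf.comp ih)
  have hU1 : U 1 = U 0 + 1 := by
    have hcomm := f.commute_translate_intCast 1
    rw [Int.cast_one] at hcomm
    simp only [U]
    rw [translationNumber_mul_of_commute hcomm, translationNumber_translate, ofAdd_zero, map_one,
      Units.val_one, one_mul, add_comm]
  have := hU.eq_of_dense_of_forall_eq_add_int hD h 1 0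
  linarith

end CircleDeg1Lift

namespace HomeoZR

theorem surjective (f : HomeoZR) : Surjective f.toFun :=
  fun y => ⟨f.invFun y, f.right_inv y⟩

theorem coe_toLift (f : HomeoZR) : ⇑f.toLift = f.toFun := rfl

theorem continuous (f : HomeoZR) : Continuous f.toFun :=
  f.toLift.continuous_iff_surjective.2 f.surjective

theorem toLift_comp (f g : HomeoZR) : (f.comp g).toLift = f.toLift * g.toLift := rfl

def toHomeomorph (f : HomeoZR) : ℝ ≃ₜ ℝ where
  toFun := f.toFun
  invFun := f.invFun
  left_inv := f.left_inv
  right_inv := f.right_inv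
  continuous_toFun := f.continuous
  continuous_invFun := f.symm.continuous

noncomputable def canonLift (f : HomeoZR) : CircleDeg1Lift :=
  ↑(translate (Multiplicative.ofAdd ((-⌊f.transNum⌋ : ℤ) : ℝ))) * f.toLift

theorem coe_canonLift (f : HomeoZR) : ⇑f.canonLift = f.canon := by
  funext x
  simp [canonLift, canon, coe_toLift, neg_add_eq_sub]

theorem coe_canonLift_mul_canonLift (f g : HomeoZR) :
    ⇑(f.canonLift * g.canonLift) = f.canon ∘ g.canon := by
  rw [coe_mul, coe_canonLift, coe_canonLift]

theorem strictMono_canon (f : HomeoZR) : StrictMono f.canon :=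
  fun _ _ h => sub_lt_sub_right (f.strictMono h) _

theorem translationNumber_canonLift (f : HomeoZR) :
    f.canonLift.translationNumber = Int.fract f.transNum := by
  rw [canonLift, translationNumber_mul_of_commute (f.toLift.commute_translate_intCast _),
    translationNumber_translate, Int.fract, transNum, Int.cast_neg, neg_add_eq_sub]

theorem exists_canon_iterate_eq_add_int (f : HomeoZR) {x : ℝ} (hx : x ∈ f.Per) :
    ∃ n, 0 < n ∧ ∃ m : ℤ, f.canon^[n] x = x + m := by
  obtain ⟨n, hn, m, hm⟩ := hx
  refine ⟨n, hn, m + n * (-⌊f.transNum⌋), ?_⟩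
  rw [← coe_canonLift, ← coe_pow, canonLift, (f.toLift.commute_translate_intCast _).mul_pow,
    ← Units.val_pow_eq_pow_val, translate_pow, mul_apply, translate_apply, coe_pow,
    coe_toLift, hm]
  push_cast
  ring

variable {g : HomeoZR} {r : ℚ}

theorem q_eq_den (hg : g.transNum = r) : g.q = r.den := by
  have hset : {n : ℕ | 0 < n ∧ ∃ x : ℝ, ∃ m : ℤ, g.toFun^[n] x = x + m} =
      {n | 0 < n ∧ r.den ∣ n} := by
    ext n
    refine and_congr_right fun hn => ?_
    rw [← r.exists_eq_intCast_div_iff_den_dvd hn, exists_comm]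
    refine exists_congr fun m => ?_
    rw [← coe_toLift, ← coe_pow, ← g.toLift.translationNumber_eq_rat_iff g.continuous hn]
    change g.transNum = _ ↔ _
    rw [hg]
    exact_mod_cast Iff.rfl
  rw [q, hset]
  exact le_antisymm (Nat.sInf_le ⟨r.pos, dvd_rfl⟩)
    (le_csInf ⟨_, r.pos, dvd_rfl⟩ fun n hn => Nat.le_of_dvd hn.1 hn.2)

theorem p_eq_num_emod_den (hg : g.transNum = r) : (g.p : ℤ) = r.num % r.den := by
  have hd : (r.den : ℚ) ≠ 0 := by positivity
  have hset : {p : ℕ | ∃ m : ℤ, g.transNum = (p : ℝ) / (g.q : ℝ) + (m : ℝ)} =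
      {p : ℕ | (p : ℤ) % r.den = r.num % r.den} := by
    ext p
    rw [mem_ofPred_eq, mem_ofPred_eq, q_eq_den hg, hg]
    have hcast : ∀ m : ℤ, (r : ℝ) = p / r.den + m ↔ r.num = p + m * r.den := fun m => by
      rw [show (p : ℝ) / r.den + m = ((p / r.den + m : ℚ) : ℝ) by push_cast; rfl, Rat.cast_inj,
        ← mul_left_inj' hd, r.mul_den_eq_num, add_mul, div_mul_cancel₀ _ hd]
      exact_mod_cast Iff.rfl
    simp only [hcast]
    constructor
    · rintro ⟨m, hm⟩
      rw [hm, Int.add_mul_emod_self_right]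
    · intro h
      obtain ⟨m, hm⟩ := Int.ModEq.dvd h
      exact ⟨m, by linarith⟩
  have hnonneg : 0 ≤ r.num % r.den := Int.emod_nonneg _ (by positivity)
  have hmem : (r.num % r.den).toNat ∈ {p : ℕ | (p : ℤ) % r.den = r.num % r.den} := by
    rw [mem_ofPred_eq, Int.toNat_of_nonneg hnonneg, Int.emod_emod]
  suffices sInf {p : ℕ | (p : ℤ) % r.den = r.num % r.den} = (r.num % r.den).toNat by
    rw [p, hset, this, Int.toNat_of_nonneg hnonneg]
  refine le_antisymm (Nat.sInf_le hmem) (le_csInf ⟨_, hmem⟩ fun p hp => ?_)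
  have : r.num % r.den ≤ p := by
    rw [← hp.out, ← Int.natCast_mod]
    exact_mod_cast Nat.mod_le p r.den
  omega

theorem canon_iterate_den_eq (hg : g.transNum = r) {x : ℝ} (hx : x ∈ g.Per) :
    g.canon^[r.den] x = x + (r.num % r.den : ℤ) := by
  obtain ⟨n, hn, m, hm⟩ := g.exists_canon_iterate_eq_add_int hx
  have hτ : g.canonLift.translationNumber = (Int.fract r : ℚ) := by
    rw [translationNumber_canonLift, hg, Rat.cast_fract]
  have := g.canonLift.iterate_den_eq_add_num hτ hn (by rwa [coe_canonLift])
  rwa [coe_canonLift, Rat.den_intFract, Rat.num_intFract] at this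

end HomeoZR

section Delta

variable {g : HomeoZR} {F : ℝ → HomeoZR}

theorem delta_add_int (x t : ℝ) (k : ℤ) : delta F g (x + k) t = delta F g x t := by
  rw [delta, delta, ← HomeoZR.coe_canonLift_mul_canonLift, ← coe_pow, map_add_int]
  ring

theorem continuous_delta (t : ℝ) : Continuous fun x => delta F g x t := by
  simp only [delta, ← HomeoZR.coe_canonLift_mul_canonLift, ← coe_pow]
  refine ((((F t).canonLift * g.canonLift).continuous_pow ?_ g.q).sub continuous_id).sub
    continuous_const
  rw [HomeoZR.coe_canonLift_mul_canonLift]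
  exact ((F t).continuous.sub continuous_const).comp (g.continuous.sub continuous_const)

theorem add_int_mem_Pset_iff (x : ℝ) (k : ℤ) : x + k ∈ Pset F g ↔ x ∈ Pset F g := by
  simp only [Pset, mem_ofPred_eq, delta_add_int]

theorem add_int_mem_Nset_iff (x : ℝ) (k : ℤ) : x + k ∈ Nset F g ↔ x ∈ Nset F g := by
  simp only [Nset, mem_ofPred_eq, delta_add_int]

end Delta

namespace PosFamily

variable {f g : HomeoZR} {F : ℝ → HomeoZR}

theorem apply_add (hF : PosFamily f F) (s t x : ℝ) :
    (F (s + t)).toFun x = (F s).toFun ((F t).toFun x) := by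
  rw [hF.1]; rfl

theorem apply_zero (hF : PosFamily f F) (x : ℝ) : (F 0).toFun x = x :=
  (F 0).strictMono.injective (by rw [← hF.apply_add, add_zero])

theorem toLift_add (hF : PosFamily f F) (s t : ℝ) :
    (F (s + t)).toLift = (F s).toLift * (F t).toLift :=
  CircleDeg1Lift.ext (hF.apply_add s t)

noncomputable def toLiftHom (hF : PosFamily f F) : Multiplicative ℝ →* CircleDeg1Lift where
  toFun t := (F t.toAdd).toLift
  map_one' := CircleDeg1Lift.ext hF.apply_zero
  map_mul' s t := hF.toLift_add s.toAdd t.toAdd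

noncomputable def transNumHom (hF : PosFamily f F) : ℝ →+ ℝ where
  toFun t := (F t).transNum
  map_zero' := by
    change (F 0).toLift.translationNumber = 0
    rw [show (F 0).toLift = 1 from CircleDeg1Lift.ext hF.apply_zero, translationNumber_one]
  map_add' s t := by
    change (F (s + t)).toLift.translationNumber = _
    rw [hF.toLift_add]
    exact translationNumber_mul_of_commute (by rw [_root_.Commute, SemiconjBy, ← hF.toLift_add,
      ← hF.toLift_add, add_comm])

theorem apply_eq_self_of_mem_frontier (hF : PosFamily f F) {y : ℝ} (hy : y ∈ frontier f.Per)
    (t : ℝ) : (F t).toFun y = y := by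
  have hfix : ∀ s, ∃ m : ℤ, (F s).toFun y = y + m := by
    intro s
    rcases eq_or_ne s 0 with rfl | hs
    · exact ⟨0, by rw [hF.apply_zero, Int.cast_zero, add_zero]⟩
    · rw [← hF.2.2.1 s hs] at hy
      exact hy
  have hzero := DFunLike.congr_fun (hF.transNumHom.eq_zero_of_forall_eq_intCast
    fun s => (hfix s).imp fun _ hm => (F s).toLift.translationNumber_of_eq_add_int hm) t
  obtain ⟨m, hm⟩ := hfix t
  have : (m : ℝ) = 0 := ((F t).toLift.translationNumber_of_eq_add_int hm).symm.trans hzero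
  rw [hm, this, add_zero]

theorem mem_frontier_of_apply_eq_apply (hF : PosFamily f F) {s t : ℝ} (hst : s ≠ t) {y : ℝ}
    (h : (F s).toFun y = (F t).toFun y) : y ∈ frontier f.Per := by
  have hz : (F s).toFun y ∈ frontier f.Per := by
    rw [← hF.2.2.1 (t - s) (sub_ne_zero.2 hst.symm)]
    refine ⟨0, ?_⟩
    rw [Int.cast_zero, add_zero, ← hF.apply_add, sub_add_cancel, h]
  rwa [(F s).strictMono.injective (hF.apply_eq_self_of_mem_frontier hz s)] at hz

section FrontierNonempty

variable (hF : PosFamily f F) (hfr : (frontier f.Per).Nonempty)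
include hF hfr

theorem transNum_eq_zero (t : ℝ) : (F t).transNum = 0 := by
  obtain ⟨y, hy⟩ := hfr
  exact_mod_cast (F t).toLift.translationNumber_of_eq_add_int (m := 0)
    (by rw [Int.cast_zero, add_zero]; exact hF.apply_eq_self_of_mem_frontier hy t)

theorem canon_eq (t : ℝ) : (F t).canon = (F t).toFun := by
  funext x
  simp [HomeoZR.canon, hF.transNum_eq_zero hfr]

theorem le_apply {t : ℝ} (ht : 0 ≤ t) (y : ℝ) : y ≤ (F t).toFun y := by
  rcases ht.eq_or_lt with rfl | ht
  · rw [hF.apply_zero]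
  by_cases hy : y ∈ frontier f.Per
  · rw [hF.apply_eq_self_of_mem_frontier hy]
  · exact (hF.2.2.2 t ht y hy).le.trans_eq (congrFun (hF.canon_eq hfr t) y)

theorem monotone_apply (y : ℝ) : Monotone fun t => (F t).toFun y := fun s t hst => by
  dsimp only
  rw [← sub_add_cancel t s, hF.apply_add]
  exact hF.le_apply hfr (sub_nonneg.2 hst) _

theorem continuous_apply (y : ℝ) : Continuous fun t => (F t).toFun y :=
  (hF.monotone_apply hfr y).continuous_of_forall_map_add (S := univ)
    Cardinal.not_countable_real fun s _ => ⟨(F s).toHomeomorph, fun t => hF.apply_add s t y⟩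

theorem continuous_uncurry_apply : Continuous fun p : ℝ × ℝ => (F p.1).toFun p.2 :=
  continuous_uncurry_of_monotone (hF.monotone_apply hfr) (hF.continuous_apply hfr)
    fun t => (F t).continuous

theorem transNum_comp (hconst : ∀ t : ℝ, ∃ m : ℤ, ((F t).comp g).transNum = g.transNum + m)
    (t : ℝ) : ((F t).comp g).transNum = g.transNum := by
  have hcont : Continuous fun t => ((F t).comp g).transNum := by
    refine continuous_translationNumber fun n => ?_
    induction n with
    | zero => simpa using continuous_const
    | succ n ih =>
      simp only [pow_succ', mul_apply]
      exact (hF.continuous_uncurry_apply hfr).comp (continuous_id.prodMk (g.continuous.comp ih))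
  rw [hcont.eq_of_dense_of_forall_eq_add_int dense_univ (fun t _ => hconst t) t 0]
  exact congrArg translationNumber (CircleDeg1Lift.ext fun x => hF.apply_zero (g.toFun x))

theorem canon_comp (hconst : ∀ t : ℝ, ∃ m : ℤ, ((F t).comp g).transNum = g.transNum + m)
    (t : ℝ) : ((F t).comp g).canon = (F t).canon ∘ g.canon := by
  funext x
  rw [hF.canon_eq hfr, comp_apply, HomeoZR.canon, HomeoZR.canon, hF.transNum_comp hfr hconst]
  exact ((F t).toLift.map_sub_int _ _).symm

theorem delta_eq_zero_of_mem_Per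
    (hconst : ∀ t : ℝ, ∃ m : ℤ, ((F t).comp g).transNum = g.transNum + m) {r : ℚ}
    (hg : g.transNum = r) {t x : ℝ} (hx : x ∈ ((F t).comp g).Per) : delta F g x t = 0 := by
  have hx' := HomeoZR.canon_iterate_den_eq ((hF.transNum_comp hfr hconst t).trans hg) hx
  rw [hF.canon_comp hfr hconst] at hx'
  rw [delta, HomeoZR.q_eq_den hg, hx', ← HomeoZR.p_eq_num_emod_den hg, Int.cast_natCast]
  ring

theorem monotone_delta (x : ℝ) : Monotone (delta F g x) := fun s t hst => by
  simp only [delta, hF.canon_eq hfr]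
  have : ((F s).toFun ∘ g.canon)^[g.q] x ≤ ((F t).toFun ∘ g.canon)^[g.q] x :=
    ((F s).strictMono.comp g.strictMono_canon).monotone.iterate_le_of_le
      (fun y => hF.monotone_apply hfr (g.canon y) hst) g.q x
  linarith

/-- At the first step either the two orbits agree, which puts `ĝ x` in the frontier, where every
`F u` is the identity, or the later orbit gets strictly ahead and stays ahead. -/
theorem iterate_comp_eq_of_iterate_comp_eq {ĝ : ℝ → ℝ} (hĝ : StrictMono ĝ) {t t' : ℝ}
    (htt : t < t') {n : ℕ} {x : ℝ} (h : ((F t).toFun ∘ ĝ)^[n] x = ((F t').toFun ∘ ĝ)^[n] x)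
    (s : ℝ) : ((F s).toFun ∘ ĝ)^[n] x = ((F t).toFun ∘ ĝ)^[n] x := by
  induction n generalizing x with
  | zero => rfl
  | succ n ih =>
    have hmono : StrictMono ((F t).toFun ∘ ĝ) := (F t).strictMono.comp hĝ
    have hle : (F t).toFun ∘ ĝ ≤ (F t').toFun ∘ ĝ := fun y => hF.monotone_apply hfr _ htt.le
    rw [iterate_succ_apply, iterate_succ_apply] at h ⊢
    rcases (hle x).eq_or_lt with heq | hlt
    · have hfix : ∀ u, ((F u).toFun ∘ ĝ) x = ĝ x := fun u =>
        hF.apply_eq_self_of_mem_frontier (hF.mem_frontier_of_apply_eq_apply htt.ne heq) u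
      rw [hfix, hfix] at h ⊢
      exact ih h
    · refine absurd h (ne_of_lt ?_)
      calc ((F t).toFun ∘ ĝ)^[n] (((F t).toFun ∘ ĝ) x)
          < ((F t).toFun ∘ ĝ)^[n] (((F t').toFun ∘ ĝ) x) := (hmono.iterate n) hlt
        _ ≤ ((F t').toFun ∘ ĝ)^[n] (((F t').toFun ∘ ĝ) x) :=
          hmono.monotone.iterate_le_of_le hle n _

theorem delta_eq_of_delta_eq {x t t' : ℝ} (htt : t < t') (h : delta F g x t = delta F g x t')
    (s : ℝ) : delta F g x s = delta F g x t := by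
  simp only [delta, hF.canon_eq hfr] at h ⊢
  rw [hF.iterate_comp_eq_of_iterate_comp_eq hfr g.strictMono_canon htt (by linarith) s]

theorem eventually_delta_ne_zero {x : ℝ} (hP : x ∉ Pset F g) (hN : x ∉ frontier (Nset F g)) :
    ∀ᶠ p in atTop ×ˢ 𝓝 x, delta F g p.2 p.1 ≠ 0 := by
  by_cases hx : x ∈ Nset F g
  · have hint : x ∈ interior (Nset F g) := by_contra fun h => hN ⟨subset_closure hx, h⟩
    filter_upwards [prod_mem_prod univ_mem (mem_interior_iff_mem_nhds.1 hint)] with p hp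
    exact hp.2 p.1
  · obtain ⟨t₁, ht₁⟩ : ∃ t₁, delta F g x t₁ = 0 := by simpa [Nset] using hx
    have hpos : 0 < delta F g x (t₁ + 1) := by
      refine lt_of_le_of_ne (ht₁ ▸ hF.monotone_delta hfr x (by linarith)) fun h => hP fun s => ?_
      rw [hF.delta_eq_of_delta_eq hfr (lt_add_one t₁) (ht₁.trans h) s, ht₁]
    filter_upwards [prod_mem_prod (Ici_mem_atTop (t₁ + 1))
      ((continuous_delta (t₁ + 1)).continuousAt.eventually (lt_mem_nhds hpos))] with p hp
    exact (hp.2.trans_le (hF.monotone_delta hfr p.2 hp.1)).ne'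

end FrontierNonempty

section FrontierEmpty

variable (hF : PosFamily f F) (hfr : frontier f.Per = ∅)
include hF hfr

theorem apply_ne_add_int {t : ℝ} (ht : t ≠ 0) (x : ℝ) (m : ℤ) : (F t).toFun x ≠ x + m := by
  intro h
  have : x ∈ (F t).FixS := ⟨m, h⟩
  rwa [hF.2.2.1 t ht, hfr] at this

theorem injective_transNumHom : Injective hF.transNumHom := by
  refine (injective_iff_map_eq_zero _).2 fun t ht => by_contra fun h => ?_
  obtain ⟨x, hx⟩ := ((F t).toLift.translationNumber_eq_int_iff (F t).continuous (m := 0)).1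
    (by rw [Int.cast_zero]; exact ht)
  exact hF.apply_ne_add_int hfr h x 0 hx

theorem not_countable_range_transNumHom : ¬ (range hF.transNumHom).Countable := fun h =>
  Cardinal.not_countable_real
    (by simpa only [preimage_range] using h.preimage (hF.injective_transNumHom hfr))

theorem exists_units_conj_translate :
    ∃ u : CircleDeg1Liftˣ, ∀ t, (F t).toLift =
      ↑u * ↑(translate (Multiplicative.ofAdd (hF.transNumHom t))) * ↑u⁻¹ := by
  have hΛ := hF.not_countable_range_transNumHom hfr
  set φ := hF.transNumHom
  let T : Multiplicative ℝ →* CircleDeg1Lift :=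
    (Units.coeHom CircleDeg1Lift).comp (translate.comp (AddMonoidHom.toMultiplicative φ))
  obtain ⟨H, hH⟩ := semiconj_of_group_action_of_forall_translationNumber_eq T hF.toLiftHom
    fun t => translationNumber_translate _
  have hsemi : ∀ t y, H (φ t + y) = (F t).toFun (H y) := fun t y =>
    hH (Multiplicative.ofAdd t) y
  have hHc : Continuous H := H.monotone.continuous_of_forall_map_add hΛ (by
    rintro _ ⟨t, rfl⟩
    exact ⟨(F t).toHomeomorph, hsemi t⟩)
  have hHi : Injective H := H.monotone.injective_of_semiconj_add φ (fun t => (F t).toFun) hsemi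
    fun t ht z => by simpa using hF.apply_ne_add_int hfr ht z 0
  obtain ⟨u, rfl⟩ : IsUnit H := isUnit_iff_bijective.2 ⟨hHi, H.continuous_iff_surjective.1 hHc⟩
  exact ⟨u, fun t => (Units.eq_mul_inv_iff_mul_eq u).2
    ((semiconjBy_iff_semiconj).2 (hH (Multiplicative.ofAdd t))).symm⟩

end FrontierEmpty

theorem frontier_nonempty (hF : PosFamily f F)
    (hconst : ∀ t : ℝ, ∃ m : ℤ, ((F t).comp g).transNum = g.transNum + m) :
    (frontier f.Per).Nonempty := by
  rw [nonempty_iff_ne_empty]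
  intro hfr
  have hdense : Dense (range hF.transNumHom) := by
    simpa only [AddMonoidHom.coe_range] using hF.transNumHom.range.dense_of_not_countable
      (by simpa only [AddMonoidHom.coe_range] using hF.not_countable_range_transNumHom hfr)
  obtain ⟨u, hu⟩ := hF.exists_units_conj_translate hfr
  have hg' : Continuous (↑u⁻¹ * g.toLift * ↑u : CircleDeg1Lift) :=
    (continuous_coe_units u⁻¹).comp (g.continuous.comp (continuous_coe_units u))
  obtain ⟨_, ⟨t, rfl⟩, hne⟩ :=
    exists_translationNumber_translate_mul_ne_add_int hg' hdense g.transNum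
  obtain ⟨m, hm⟩ := hconst t
  refine hne m (Eq.trans ?_ hm)
  rw [HomeoZR.transNum, HomeoZR.toLift_comp, hu, ← translationNumber_conj_eq u]
  simp only [mul_assoc, Units.mul_inv, mul_one]

end PosFamily

theorem Per_near_P_union_frontierN_general (f g : HomeoZR)
    (hg : RatRot g)
    (F : ℝ → HomeoZR) (hF : PosFamily f F)
    (hconst : ∀ t : ℝ, ∃ m : ℤ, ((F t).comp g).transNum = g.transNum + m) :
    ∀ ε : ℝ, 0 < ε → ∃ t₀ : ℝ, ∀ t : ℝ, t₀ < t →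
      ((F t).comp g).Per ⊆
        Metric.thickening ε (Pset F g ∪ frontier (Nset F g)) := by
  intro ε hε
  obtain ⟨r, hr⟩ := hg
  have hfr := hF.frontier_nonempty hconst
  set A := Pset F g ∪ frontier (Nset F g)
  have hA : ∀ z ∈ A, ∀ k : ℤ, z + k ∈ A := fun z hz k =>
    hz.imp (add_int_mem_Pset_iff z k).2
      (add_mem_frontier_iff (fun y => add_int_mem_Nset_iff y k) z).2
  set K := Icc (0 : ℝ) 1 \ Metric.thickening ε A
  have hev : ∀ᶠ p in atTop ×ˢ 𝓝ˢ K, delta F g p.2 p.1 ≠ 0 :=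
    (isCompact_Icc.diff Metric.isOpen_thickening).mem_prod_nhdsSet_of_forall fun y hy =>
      hF.eventually_delta_ne_zero hfr
        (fun h => hy.2 (Metric.self_subset_thickening hε _ (Or.inl h)))
        (fun h => hy.2 (Metric.self_subset_thickening hε _ (Or.inr h)))
  obtain ⟨t₀, ht₀⟩ := eventually_atTop.1 (hev.curry.mono fun t ht => ht.self_of_nhdsSet)
  refine ⟨t₀, fun t ht x hx => by_contra fun hxA => ?_⟩
  have hfract : Int.fract x ∈ K := ⟨⟨Int.fract_nonneg x, (Int.fract_lt_one x).le⟩, fun h =>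
    hxA (by simpa using add_int_mem_thickening hA h ⌊x⌋)⟩
  refine ht₀ t ht.le _ hfract ?_
  rw [Int.fract, sub_eq_add_neg, ← Int.cast_neg, delta_add_int]
  exact hF.delta_eq_zero_of_mem_Per hfr hconst hr hx

/-- Lemma 2.5 (4). For any `ε > 0` there is `t₀` such that for all
`t > t₀`, `Per(f_t ∘ g)` lies in the `ε`-neighborhood of `P(f,g) ∪ ∂N(f,g)`. -/
theorem Per_near_P_union_frontierN (f g : HomeoZR)
    (hf : RatRot f) (hg : RatRot g)
    (F : ℝ → HomeoZR) (hF : PosFamily f F)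
    (hconst : ∀ t : ℝ, ∃ m : ℤ, ((F t).comp g).transNum = g.transNum + m) :
    ∀ ε : ℝ, 0 < ε → ∃ t₀ : ℝ, ∀ t : ℝ, t₀ < t →
      ((F t).comp g).Per ⊆
        Metric.thickening ε (Pset F g ∪ frontier (Nset F g)) :=
  Per_near_P_union_frontierN_general f g hg F hF hconst
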